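/- arXiv:2004.10388 — 4 statements merged into one kernel-verified Lean document; each statement's English description precedes it below -/
import Mathlib

section
/- For μ ∈ ℂ with Re μ < 0 and a real exponent γ with −1 < γ < 0, the integral ∫₀^t (t−τ)^γ e^{μτ} dτ tends to 0 as t → ∞. -/
open Filter

open MeasureTheory Set intervalIntegral
theorem stmt_5 (μ : ℂ) (hμ : μ.re < 0) (γ : ℝ) (hγ₁ : -1 < γ) (hγ₂ : γ < 0) :
    Tendsto (fun t : ℝ => ∫ τ in (0:ℝ)..t, (((t - τ) ^ γ : ℝ) : ℂ) * Complex.exp (μ * τ))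
      atTop (nhds 0) := by
  set a : ℝ := μ.re with ha_def
  have ha : a < 0 := hμ
  have hγ1 : (0:ℝ) < γ + 1 := by linarith
  -- the bounding function
  set g : ℝ → ℝ := fun t =>
    (t/2) ^ γ * ((Real.exp (a * (t/2)) - 1) / a)
      + Real.exp (a * (t/2)) * ((t/2) ^ (γ+1) / (γ+1)) with hg_def
  have hhalf : Tendsto (fun t : ℝ => t / 2) atTop atTop :=
    tendsto_id.atTop_div_const (by norm_num)
  have hgl : Tendsto g atTop (nhds 0) := by
    have L1 : Tendsto (fun t : ℝ => (t/2) ^ γ) atTop (nhds 0) := by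
      have := (tendsto_rpow_neg_atTop (by linarith : (0:ℝ) < -γ)).comp hhalf
      simpa [Function.comp_def] using this
    have L2 : Tendsto (fun t : ℝ => (Real.exp (a * (t/2)) - 1) / a) atTop
        (nhds ((0 - 1) / a)) := by
      have hexp : Tendsto (fun t : ℝ => Real.exp (a * (t/2))) atTop (nhds 0) := by
        have hb : Tendsto (fun t : ℝ => a * (t/2)) atTop atBot :=
          (tendsto_const_mul_atBot_of_neg ha).2 hhalf
        exact Real.tendsto_exp_atBot.comp hb
      exact (hexp.sub tendsto_const_nhds).div_const a
    have T1 : Tendsto (fun t : ℝ => (t/2) ^ γ * ((Real.exp (a * (t/2)) - 1) / a))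
        atTop (nhds 0) := by
      simpa using L1.mul L2
    have T2 : Tendsto (fun t : ℝ => Real.exp (a * (t/2)) * ((t/2) ^ (γ+1) / (γ+1)))
        atTop (nhds 0) := by
      have := ((tendsto_rpow_mul_exp_neg_mul_atTop_nhds_zero (γ+1) (-a)
        (by linarith)).comp hhalf).div_const (γ+1)
      simp only [Function.comp] at this
      have heq : ∀ t : ℝ, Real.exp (a * (t/2)) * ((t/2) ^ (γ+1) / (γ+1))
          = (t/2) ^ (γ+1) * Real.exp (-(-a) * (t/2)) / (γ+1) := by
        intro t; ring_nf
      rw [show (0:ℝ) = 0 / (γ+1) by simp] at this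
      simpa [heq] using this
    simpa [hg_def] using T1.add T2
  -- the norm bound
  rw [tendsto_zero_iff_norm_tendsto_zero]
  apply squeeze_zero' (Eventually.of_forall fun t => norm_nonneg _) _ hgl
  filter_upwards [eventually_gt_atTop (0:ℝ)] with t ht
  set h : ℝ := t / 2 with hh_def
  have hh0 : 0 < h := by positivity
  have hht : h ≤ t := by simp [hh_def]; linarith
  -- integrability of the real norm function
  have Irpow : IntervalIntegrable (fun τ : ℝ => (t - τ) ^ γ) volume 0 t := by
    have := (intervalIntegrable_rpow' (a := 0) (b := t) hγ₁).comp_sub_left t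
    simpa using this.symm
  have Inf : IntervalIntegrable (fun τ : ℝ => (t - τ) ^ γ * Real.exp (a * τ)) volume 0 t :=
    Irpow.mul_continuousOn (Continuous.continuousOn (by continuity))
  have Ic : IntervalIntegrable
      (fun τ : ℝ => (((t - τ) ^ γ : ℝ) : ℂ) * Complex.exp (μ * τ)) volume 0 t := by
    have h1 : IntervalIntegrable (fun τ : ℝ => (((t - τ) ^ γ : ℝ) : ℂ)) volume 0 t := by
      rw [intervalIntegrable_iff] at Irpow ⊢
      exact (Complex.ofRealCLM : ℝ →L[ℝ] ℂ).integrable_comp Irpow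
    exact h1.mul_continuousOn (Continuous.continuousOn (by continuity))
  -- pointwise norm identity on [0, t]
  have hnorm : ∀ τ ∈ Set.uIcc (0:ℝ) t,
      ‖(((t - τ) ^ γ : ℝ) : ℂ) * Complex.exp (μ * τ)‖ = (t - τ) ^ γ * Real.exp (a * τ) := by
    intro τ hτ
    rw [Set.uIcc_of_le ht.le] at hτ
    have h1 : (0:ℝ) ≤ t - τ := by linarith [hτ.2]
    rw [norm_mul, Complex.norm_real, Real.norm_eq_abs,
      abs_of_nonneg (Real.rpow_nonneg h1 γ), Complex.norm_exp]
    congr 2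
    simp [Complex.mul_re, ha_def]
  calc ‖∫ τ in (0:ℝ)..t, (((t - τ) ^ γ : ℝ) : ℂ) * Complex.exp (μ * τ)‖
      ≤ ∫ τ in (0:ℝ)..t, ‖(((t - τ) ^ γ : ℝ) : ℂ) * Complex.exp (μ * τ)‖ :=
        intervalIntegral.norm_integral_le_integral_norm ht.le
    _ = ∫ τ in (0:ℝ)..t, (t - τ) ^ γ * Real.exp (a * τ) := by
        apply intervalIntegral.integral_congr
        intro τ hτ; exact hnorm τ hτ
    _ = (∫ τ in (0:ℝ)..h, (t - τ) ^ γ * Real.exp (a * τ))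
        + ∫ τ in h..t, (t - τ) ^ γ * Real.exp (a * τ) := by
        rw [intervalIntegral.integral_add_adjacent_intervals
          (Inf.mono_set (by rw [Set.uIcc_of_le hh0.le, Set.uIcc_of_le ht.le]; exact Set.Icc_subset_Icc le_rfl hht))
          (Inf.mono_set (by rw [Set.uIcc_of_le hht, Set.uIcc_of_le ht.le]; exact Set.Icc_subset_Icc hh0.le le_rfl))]
    _ ≤ (∫ τ in (0:ℝ)..h, h ^ γ * Real.exp (a * τ))
        + ∫ τ in h..t, (t - τ) ^ γ * Real.exp (a * h) := by
        gcongr with _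
        · apply intervalIntegral.integral_mono_on hh0.le
            (Inf.mono_set (by rw [Set.uIcc_of_le hh0.le, Set.uIcc_of_le ht.le]; exact Set.Icc_subset_Icc le_rfl hht))
            ((continuous_const.mul (by continuity)).intervalIntegrable _ _)
          intro τ hτ
          have h2 : h ≤ t - τ := by have := hτ.2; simp only [hh_def] at *; linarith
          exact mul_le_mul_of_nonneg_right
            (Real.rpow_le_rpow_of_nonpos hh0 h2 hγ₂.le) (Real.exp_pos _).le
        · apply intervalIntegral.integral_mono_on hht
            (Inf.mono_set (by rw [Set.uIcc_of_le hht, Set.uIcc_of_le ht.le]; exact Set.Icc_subset_Icc hh0.le le_rfl))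
            ((Irpow.mono_set (by rw [Set.uIcc_of_le hht, Set.uIcc_of_le ht.le]; exact Set.Icc_subset_Icc hh0.le le_rfl)).mul_continuousOn continuousOn_const)
          intro τ hτ
          have h1 : (0:ℝ) ≤ t - τ := by linarith [hτ.2]
          exact mul_le_mul_of_nonneg_left
            (Real.exp_le_exp.2 (by nlinarith [hτ.1])) (Real.rpow_nonneg h1 γ)
    _ = h ^ γ * ((Real.exp (a * h) - 1) / a) + Real.exp (a * h) * (h ^ (γ+1) / (γ+1)) := by
        congr 1
        · rw [intervalIntegral.integral_const_mul]
          congr 1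
          rw [intervalIntegral.integral_comp_mul_left (fun x => Real.exp x) (ne_of_lt ha)]
          simp [integral_exp, smul_eq_mul]
          field_simp
        · have : (∫ τ in h..t, (t - τ) ^ γ * Real.exp (a * h))
              = (∫ τ in h..t, (t - τ) ^ γ) * Real.exp (a * h) := by
            rw [← intervalIntegral.integral_mul_const]
          rw [this, intervalIntegral.integral_comp_sub_left (fun s => s ^ γ) t, sub_self]
          rw [integral_rpow (Or.inl hγ₁)]
          rw [show t - h = h by simp [hh_def]; ring]
          rw [Real.zero_rpow (by linarith : γ + 1 ≠ 0)]
          ring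
end

section
/- Let μ ∈ ℂ with Re μ < 0 and γ ∈ (−1, 0). Define F(x) = (d/dx) ∫₀^x ((x−t)^γ / Γ(γ+1)) e^{μ t} dt for x > 0. Then F(x) = x^γ/Γ(γ+1) + μ ∫₀^x ((x−t)^γ / Γ(γ+1)) e^{μ t} dt. -/
theorem stmt_7 (μ : ℂ) (hμ : μ.re < 0) (γ : ℝ) (hγ₁ : -1 < γ) (hγ₂ : γ < 0)
    (x : ℝ) (hx : 0 < x) :
    HasDerivAt
      (fun y : ℝ => ∫ t in (0:ℝ)..y, (((y - t) ^ γ / Real.Gamma (γ + 1) : ℝ) : ℂ) *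
        Complex.exp (μ * t))
      (((x ^ γ / Real.Gamma (γ + 1) : ℝ) : ℂ) +
        μ * ∫ t in (0:ℝ)..x, (((x - t) ^ γ / Real.Gamma (γ + 1) : ℝ) : ℂ) *
          Complex.exp (μ * t)) x := by
  set Γ := Real.Gamma (γ + 1) with hΓ
  set g : ℝ → ℂ := fun u => ((u ^ γ / Γ : ℝ) : ℂ) * Complex.exp (-(μ * u)) with hg
  -- change of variables identity
  have key : ∀ y : ℝ, (∫ t in (0:ℝ)..y, (((y - t) ^ γ / Γ : ℝ) : ℂ) * Complex.exp (μ * t))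
      = Complex.exp (μ * y) * ∫ u in (0:ℝ)..y, g u := by
    intro y
    have h1 : (∫ t in (0:ℝ)..y, (((y - t) ^ γ / Γ : ℝ) : ℂ) * Complex.exp (μ * t))
        = ∫ t in (0:ℝ)..y, (fun u : ℝ => ((u ^ γ / Γ : ℝ) : ℂ) * Complex.exp (μ * (y - u))) (y - t) := by
      apply intervalIntegral.integral_congr
      intro t _
      simp only
      congr 2
      push_cast
      ring
    rw [h1, intervalIntegral.integral_comp_sub_left
      (fun u : ℝ => ((u ^ γ / Γ : ℝ) : ℂ) * Complex.exp (μ * (y - u))) y]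
    simp only [sub_self, sub_zero]
    rw [← intervalIntegral.integral_const_mul]
    apply intervalIntegral.integral_congr
    intro u _
    simp only [hg]
    rw [show μ * (y - u) = μ * y + -(μ * u) by ring, Complex.exp_add]
    ring
  -- integrability of g on 0..x
  have hint : IntervalIntegrable g MeasureTheory.volume 0 x := by
    have h1 : IntervalIntegrable (fun u : ℝ => u ^ γ / Γ) MeasureTheory.volume 0 x :=
      (intervalIntegral.intervalIntegrable_rpow' hγ₁).div_const Γ
    have h2 : IntervalIntegrable (fun u : ℝ => ((u ^ γ / Γ : ℝ) : ℂ)) MeasureTheory.volume 0 x :=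
      ⟨h1.1.ofReal, h1.2.ofReal⟩
    exact h2.mul_continuousOn ((Complex.continuous_exp.comp
      ((continuous_const.mul Complex.continuous_ofReal).neg)).continuousOn)
  -- measurability / continuity of g near x
  have hcont : ContinuousOn g (Set.Ioi (0:ℝ)) := by
    apply ContinuousOn.mul
    · exact (Complex.continuous_ofReal.comp_continuousOn
        ((ContinuousOn.rpow_const continuousOn_id
          (fun u hu => Or.inl (ne_of_gt hu))).div_const Γ))
    · exact (Complex.continuous_exp.comp
        ((continuous_const.mul Complex.continuous_ofReal).neg)).continuousOn
  have hmeas : StronglyMeasurableAtFilter g (nhds x) :=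
    hcont.stronglyMeasurableAtFilter isOpen_Ioi _ hx
  have hca : ContinuousAt g x := hcont.continuousAt (Ioi_mem_nhds hx)
  -- FTC
  have hH : HasDerivAt (fun y => ∫ u in (0:ℝ)..y, g u) (g x) x :=
    intervalIntegral.integral_hasDerivAt_right hint hmeas hca
  have hExp : HasDerivAt (fun y : ℝ => Complex.exp (μ * y)) (μ * Complex.exp (μ * x)) x := by
    have h0 : HasDerivAt (fun z : ℂ => Complex.exp (μ * z)) (Complex.exp (μ * x) * (μ * 1)) (x : ℂ) :=
      (Complex.hasDerivAt_exp (μ * x)).comp (x : ℂ) ((hasDerivAt_id (x : ℂ)).const_mul μ)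
    simpa [mul_comm] using h0.comp_ofReal
  have hG : HasDerivAt (fun y : ℝ => Complex.exp (μ * y) * ∫ u in (0:ℝ)..y, g u)
      (μ * Complex.exp (μ * x) * (∫ u in (0:ℝ)..x, g u) + Complex.exp (μ * x) * g x) x :=
    hExp.mul hH
  have heq : (fun y : ℝ => ∫ t in (0:ℝ)..y, (((y - t) ^ γ / Γ : ℝ) : ℂ) * Complex.exp (μ * t))
      = fun y : ℝ => Complex.exp (μ * y) * ∫ u in (0:ℝ)..y, g u := funext key
  rw [heq, key x]
  convert hG using 1
  have hne : Complex.exp (μ * x) * (((x ^ γ / Γ : ℝ) : ℂ) * Complex.exp (-(μ * x)))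
      = ((x ^ γ / Γ : ℝ) : ℂ) := by
    rw [mul_comm, mul_assoc, ← Complex.exp_add]
    simp
  simp only [hg]
  rw [hne]
  ring
end

section
/- Let μ ∈ ℂ with Re μ < 0 and γ ∈ (−1, 0). Then the function y(x) = x^γ/Γ(γ+1) + μ ∫₀^x ((x−t)^γ/Γ(γ+1)) e^{μ t} dt + e^{μ x} tends to 0 as x → ∞. -/
open Filter MeasureTheory intervalIntegral

lemma my_integral_exp_mul (b s : ℝ) (hb : b ≠ 0) :
    ∫ t in (0:ℝ)..s, Real.exp (b * t) = (Real.exp (b * s) - 1) / b := by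
  have h : ∀ t ∈ Set.uIcc (0:ℝ) s, HasDerivAt (fun t => Real.exp (b * t) / b)
      (Real.exp (b * t)) t := by
    intro t _
    have := ((Real.hasDerivAt_exp (b * t)).comp t ((hasDerivAt_id t).const_mul b)).div_const b
    simpa [mul_comm, mul_div_assoc, mul_div_cancel_left₀ _ hb] using this
  have := intervalIntegral.integral_eq_sub_of_hasDerivAt h
    ((Real.continuous_exp.comp (continuous_const.mul continuous_id)).intervalIntegrable 0 s)
  simpa [sub_div] using this

theorem stmt_8 (μ : ℂ) (hμ : μ.re < 0) (γ : ℝ) (hγ₁ : -1 < γ) (hγ₂ : γ < 0) :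
    Tendsto
      (fun x : ℝ => ((x ^ γ / Real.Gamma (γ + 1) : ℝ) : ℂ) +
        μ * (∫ t in (0:ℝ)..x, (((x - t) ^ γ / Real.Gamma (γ + 1) : ℝ) : ℂ) *
          Complex.exp (μ * t)) + Complex.exp (μ * x))
      atTop (nhds 0) := by
  set c : ℝ := Real.Gamma (γ + 1) with hc
  have hcpos : 0 < c := Real.Gamma_pos_of_pos (by linarith)
  set a : ℝ := -μ.re with ha
  have hapos : 0 < a := by simp [ha]; linarith
  -- first term
  have h1 : Tendsto (fun x : ℝ => ((x ^ γ / c : ℝ) : ℂ)) atTop (nhds 0) := by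
    have : Tendsto (fun x : ℝ => x ^ γ / c) atTop (nhds 0) := by
      have := (tendsto_rpow_neg_atTop (y := -γ) (by linarith)).div_const c
      simpa using this
    have := (Complex.continuous_ofReal.tendsto 0).comp this
    simpa [Function.comp_def, Complex.ofReal_div] using this
  -- third term
  have h3 : Tendsto (fun x : ℝ => Complex.exp (μ * x)) atTop (nhds 0) := by
    apply squeeze_zero_norm (a := fun x : ℝ => Real.exp (-(a * x)))
    · intro x
      simp [Complex.norm_exp, ha, neg_mul]
    · exact Real.tendsto_exp_neg_atTop_nhds_zero.comp (tendsto_id.const_mul_atTop hapos)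
  -- middle term
  have h2 : Tendsto (fun x : ℝ => μ * (∫ t in (0:ℝ)..x,
      (((x - t) ^ γ / c : ℝ) : ℂ) * Complex.exp (μ * t))) atTop (nhds 0) := by
    apply squeeze_zero_norm' (a := fun x : ℝ =>
      ‖μ‖ * ((x/2) ^ γ / (c * a) + Real.exp (μ.re * (x/2)) * (x/2) ^ (γ+1) / (c * (γ+1))))
    · filter_upwards [eventually_gt_atTop (0:ℝ)] with x hx
      have hx2 : 0 < x / 2 := by linarith
      set f : ℝ → ℂ := fun t => (((x - t) ^ γ / c : ℝ) : ℂ) * Complex.exp (μ * t) with hf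
      -- integrability on the two pieces
      have hexpC : Continuous fun t : ℝ => Complex.exp (μ * t) :=
        Complex.continuous_exp.comp (continuous_const.mul Complex.continuous_ofReal)
      have hI1 : IntervalIntegrable f volume 0 (x/2) := by
        apply ContinuousOn.intervalIntegrable
        apply ContinuousOn.mul _ hexpC.continuousOn
        apply Complex.continuous_ofReal.comp_continuousOn
        apply ContinuousOn.div_const
        apply ContinuousOn.rpow_const (continuous_const.sub continuous_id).continuousOn
        intro t ht
        rw [Set.uIcc_of_le (by linarith)] at ht
        left
        have := ht.2
        intro h
        simp at h
        linarith
      have hI2 : IntervalIntegrable f volume (x/2) x := by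
        have h0 : IntervalIntegrable (fun s : ℝ => s ^ γ) volume (x - x/2) (x - x) :=
          intervalIntegrable_rpow' hγ₁
        have h0' : IntervalIntegrable (fun t : ℝ => (x - t) ^ γ) volume (x/2) x := by
          have := (intervalIntegrable_rpow' (a := x/2) (b := 0) hγ₁).comp_sub_left x
          simpa [sub_half] using this
        have h1' := (h0'.div_const c)
        have h2' : IntervalIntegrable (fun t : ℝ => (((x - t) ^ γ / c : ℝ) : ℂ))
            volume (x/2) x := ⟨h1'.1.ofReal, h1'.2.ofReal⟩
        exact h2'.mul_continuousOn hexpC.continuousOn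
      -- split
      have hsplit : (∫ t in (0:ℝ)..x, f t) =
          (∫ t in (0:ℝ)..(x/2), f t) + ∫ t in (x/2)..x, f t :=
        (integral_add_adjacent_intervals hI1 hI2).symm
      -- bound piece 1
      have hb1 : ‖∫ t in (0:ℝ)..(x/2), f t‖ ≤ (x/2) ^ γ / (c * a) := by
        have hbound : IntervalIntegrable (fun t : ℝ => (x/2) ^ γ / c * Real.exp (μ.re * t))
            volume 0 (x/2) :=
          (Continuous.intervalIntegrable (by continuity) _ _)
        have hle : ∀ᵐ t ∂volume.restrict (Set.uIoc (0:ℝ) (x/2)), ‖f t‖ ≤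
            (x/2) ^ γ / c * Real.exp (μ.re * t) := by
          apply MeasureTheory.ae_restrict_of_forall_mem measurableSet_uIoc
          intro t ht
          rw [Set.uIoc_of_le (by linarith)] at ht
          have hxt : x / 2 ≤ x - t := by linarith [ht.2]
          have hnn : (0:ℝ) ≤ (x - t) ^ γ := Real.rpow_nonneg (by linarith) _
          have hmono : (x - t) ^ γ ≤ (x/2) ^ γ :=
            Real.rpow_le_rpow_of_nonpos hx2 hxt hγ₂.le
          have hnorm : ‖f t‖ = (x - t) ^ γ / c * Real.exp (μ.re * t) := by
            rw [hf]
            rw [norm_mul, Complex.norm_real, Real.norm_eq_abs,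
              abs_of_nonneg (div_nonneg hnn hcpos.le), Complex.norm_exp]
            congr 2
            simp [Complex.mul_re]
          rw [hnorm]
          gcongr
        refine (intervalIntegral.norm_integral_le_abs_of_norm_le hle hbound).trans ?_
        rw [intervalIntegral.integral_const_mul, my_integral_exp_mul _ _ (ne_of_lt hμ)]
        have he1 : Real.exp (μ.re * (x/2)) ≤ 1 :=
          Real.exp_le_one_iff.mpr (by nlinarith)
        have he0 : 0 < Real.exp (μ.re * (x/2)) := Real.exp_pos _
        have hK : 0 ≤ (x/2) ^ γ / c := div_nonneg (Real.rpow_nonneg hx2.le _) hcpos.le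
        have heq : (Real.exp (μ.re * (x/2)) - 1) / μ.re =
            (1 - Real.exp (μ.re * (x/2))) / a := by
          rw [ha, div_neg, ← neg_div, neg_sub]
        rw [heq, abs_of_nonneg (mul_nonneg hK (div_nonneg (by linarith) hapos.le))]
        calc (x/2) ^ γ / c * ((1 - Real.exp (μ.re * (x/2))) / a)
            ≤ (x/2) ^ γ / c * (1 / a) := by
              gcongr
              linarith
          _ = (x/2) ^ γ / (c * a) := by
              rw [div_mul_div_comm, mul_one]
      -- bound piece 2
      have hb2 : ‖∫ t in (x/2)..x, f t‖ ≤
          Real.exp (μ.re * (x/2)) * (x/2) ^ (γ+1) / (c * (γ+1)) := by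
        have h0' : IntervalIntegrable (fun t : ℝ => (x - t) ^ γ) volume (x/2) x := by
          have := (intervalIntegrable_rpow' (a := x/2) (b := 0) hγ₁).comp_sub_left x
          simpa [sub_half] using this
        have hbound : IntervalIntegrable
            (fun t : ℝ => (x - t) ^ γ * (Real.exp (μ.re * (x/2)) / c)) volume (x/2) x :=
          h0'.mul_const _
        have hle : ∀ᵐ t ∂volume.restrict (Set.uIoc (x/2) x), ‖f t‖ ≤
            (x - t) ^ γ * (Real.exp (μ.re * (x/2)) / c) := by
          apply MeasureTheory.ae_restrict_of_forall_mem measurableSet_uIoc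
          intro t ht
          rw [Set.uIoc_of_le (by linarith)] at ht
          have hnn : (0:ℝ) ≤ (x - t) ^ γ := Real.rpow_nonneg (by linarith [ht.2]) _
          have hnorm : ‖f t‖ = (x - t) ^ γ / c * Real.exp (μ.re * t) := by
            rw [hf]
            rw [norm_mul, Complex.norm_real, Real.norm_eq_abs,
              abs_of_nonneg (div_nonneg hnn hcpos.le), Complex.norm_exp]
            congr 2
            simp [Complex.mul_re]
          rw [hnorm]
          have hee : Real.exp (μ.re * t) ≤ Real.exp (μ.re * (x/2)) := by
            apply Real.exp_le_exp.mpr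
            nlinarith [ht.1.le]
          calc (x - t) ^ γ / c * Real.exp (μ.re * t)
              ≤ (x - t) ^ γ / c * Real.exp (μ.re * (x/2)) := by gcongr
            _ = (x - t) ^ γ * (Real.exp (μ.re * (x/2)) / c) := by ring
        refine (intervalIntegral.norm_integral_le_abs_of_norm_le hle hbound).trans ?_
        rw [intervalIntegral.integral_mul_const]
        have hint : (∫ t in (x/2)..x, (x - t) ^ γ) = (x/2) ^ (γ+1) / (γ+1) := by
          have := intervalIntegral.integral_comp_sub_left (a := x/2) (b := x)
            (fun s : ℝ => s ^ γ) x
          rw [this]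
          simp only [sub_self, sub_half]
          rw [integral_rpow (Or.inl hγ₁)]
          rw [Real.zero_rpow (by linarith : γ + 1 ≠ 0)]
          ring
        rw [hint]
        rw [abs_of_nonneg (mul_nonneg (div_nonneg (Real.rpow_nonneg hx2.le _) (by linarith))
          (div_nonneg (Real.exp_pos _).le hcpos.le))]
        rw [div_mul_div_comm]
        rw [mul_comm ((x/2) ^ (γ+1)) (Real.exp (μ.re * (x/2))), mul_comm (γ+1) c]
      calc ‖μ * (∫ t in (0:ℝ)..x, f t)‖
          = ‖μ‖ * ‖(∫ t in (0:ℝ)..(x/2), f t) + ∫ t in (x/2)..x, f t‖ := by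
            rw [hsplit]; simp
        _ ≤ ‖μ‖ * (‖∫ t in (0:ℝ)..(x/2), f t‖ + ‖∫ t in (x/2)..x, f t‖) := by
            gcongr; exact norm_add_le _ _
        _ ≤ ‖μ‖ * ((x/2) ^ γ / (c * a) +
              Real.exp (μ.re * (x/2)) * (x/2) ^ (γ+1) / (c * (γ+1))) := by
            gcongr
    · -- the bounding function tends to 0
      have t1 : Tendsto (fun x : ℝ => (x/2) ^ γ / (c * a)) atTop (nhds 0) := by
        have base : Tendsto (fun x : ℝ => x ^ γ) atTop (nhds 0) := by
          have := tendsto_rpow_neg_atTop (y := -γ) (by linarith)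
          simpa using this
        have hdiv : Tendsto (fun x : ℝ => x / 2) atTop atTop :=
          tendsto_id.atTop_div_const (by norm_num)
        have := (base.comp hdiv).div_const (c * a)
        simpa using this
      have t2 : Tendsto (fun x : ℝ =>
          Real.exp (μ.re * (x/2)) * (x/2) ^ (γ+1) / (c * (γ+1))) atTop (nhds 0) := by
        have base := tendsto_rpow_mul_exp_neg_mul_atTop_nhds_zero (γ+1) a hapos
        have hdiv : Tendsto (fun x : ℝ => x / 2) atTop atTop :=
          tendsto_id.atTop_div_const (by norm_num)
        have comp := (base.comp hdiv).div_const (c * (γ+1))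
        have : (fun x : ℝ => Real.exp (μ.re * (x/2)) * (x/2) ^ (γ+1) / (c * (γ+1))) =
            (fun y : ℝ => y ^ (γ+1) * Real.exp (-a * y) / (c * (γ+1))) ∘ (fun x => x / 2) := by
          funext x
          simp only [Function.comp_apply]
          rw [mul_comm (Real.exp _)]
          congr 2
          rw [ha]; ring_nf
        rw [this]
        rw [zero_div] at comp
        exact comp
      have := (t1.add t2).const_mul (‖μ‖)
      simpa using this
  have := (h1.add h2).add h3
  simpa using this
end

section
/- Let F be n×n, G n×1, Q, R symmetric with R invertible, and let H = [[F, −GR⁻¹Gᵀ], [−Q, −Fᵀ]]. If T = [[T₁, T₂], [T₃, T₄]] block-diagonalizes H as T⁻¹HT = diag(A₊, A₋) with T₁ invertible, then S = T₃T₁⁻¹ satisfies the algebraic Riccati equation SF + FᵀS − SGR⁻¹GᵀS + Q = 0. -/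
open Matrix

theorem stmt_12 (n : ℕ)
    (F Q S : Matrix (Fin n) (Fin n) ℝ) (G : Matrix (Fin n) (Fin 1) ℝ)
    (R : Matrix (Fin 1) (Fin 1) ℝ) (hQ : Qᵀ = Q) (hR : Rᵀ = R) (hRinv : IsUnit R)
    (T₁ T₃ Aplus : Matrix (Fin n) (Fin n) ℝ) (hT₁ : IsUnit T₁)
    (hinv1 : F * T₁ - G * R⁻¹ * Gᵀ * T₃ = T₁ * Aplus)
    (hinv2 : -Q * T₁ - Fᵀ * T₃ = T₃ * Aplus)
    (hS : S = T₃ * T₁⁻¹) :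
    S * F + Fᵀ * S - S * G * R⁻¹ * Gᵀ * S + Q = 0 := by
  have hdet : IsUnit T₁.det := (Matrix.isUnit_iff_isUnit_det _).mp hT₁
  have h1 : T₁ * T₁⁻¹ = 1 := Matrix.mul_nonsing_inv _ hdet
  have h2 : T₁⁻¹ * T₁ = 1 := Matrix.nonsing_inv_mul _ hdet
  subst hS
  have key : (-Q * T₁ - Fᵀ * T₃) * T₁⁻¹
      = T₃ * T₁⁻¹ * ((F * T₁ - G * R⁻¹ * Gᵀ * T₃) * T₁⁻¹) := by
    rw [hinv2, hinv1]
    calc T₃ * Aplus * T₁⁻¹ = T₃ * (T₁⁻¹ * T₁) * Aplus * T₁⁻¹ := by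
          rw [h2, Matrix.mul_one]
    _ = T₃ * T₁⁻¹ * (T₁ * Aplus * T₁⁻¹) := by simp [Matrix.mul_assoc]
  have expand1 : (-Q * T₁ - Fᵀ * T₃) * T₁⁻¹ = -Q - Fᵀ * (T₃ * T₁⁻¹) := by
    rw [sub_mul, Matrix.mul_assoc (-Q), h1, Matrix.mul_one, Matrix.mul_assoc]
  have expand2 : T₃ * T₁⁻¹ * ((F * T₁ - G * R⁻¹ * Gᵀ * T₃) * T₁⁻¹)
      = T₃ * T₁⁻¹ * F - T₃ * T₁⁻¹ * (G * R⁻¹ * Gᵀ) * (T₃ * T₁⁻¹) := by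
    rw [sub_mul, Matrix.mul_assoc F, h1, Matrix.mul_one, Matrix.mul_sub]
    simp [Matrix.mul_assoc]
  rw [expand1, expand2] at key
  calc T₃ * T₁⁻¹ * F + Fᵀ * (T₃ * T₁⁻¹) - T₃ * T₁⁻¹ * G * R⁻¹ * Gᵀ * (T₃ * T₁⁻¹) + Q
      = (T₃ * T₁⁻¹ * F - T₃ * T₁⁻¹ * (G * R⁻¹ * Gᵀ) * (T₃ * T₁⁻¹)) - (-Q - Fᵀ * (T₃ * T₁⁻¹)) := by
        simp only [Matrix.mul_assoc]
        abel
    _ = 0 := by rw [← key]; abel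
end
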